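/- Let T be a light tournament containing at least one directed triangle. Then there exist distinct vertices u and v of T such that the dichromatic number of T[N⁺(u)] is at most 3, the dichromatic number of T[N⁻(v)] is at most 3, and the dichromatic number of T[N⁻(v) ∪ N⁺(u)] is at most 5. -/

import Mathlib

/-- A tournament on a vertex type `V`: for every two distinct vertices exactly one
of the two possible arcs is present, and there are no loops. -/
structure Tournament (V : Type) where
  arc : V → V → Prop
  asymm : ∀ u v, arc u v → ¬ arc v u
  total : ∀ u v, u ≠ v → arc u v ∨ arc v u

namespace Tournament

variable {V : Type}

/-- A set of vertices is transitive (acyclic) if it contains no directed triangle. -/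
def IsTransitiveSet (T : Tournament V) (S : Set V) : Prop :=
  ∀ a ∈ S, ∀ b ∈ S, ∀ c ∈ S, ¬ (T.arc a b ∧ T.arc b c ∧ T.arc c a)

/-- Out-neighborhood `N⁺(v)`. -/
def outN (T : Tournament V) (v : V) : Set V := {w | T.arc v w}

/-- In-neighborhood `N⁻(v)`. -/
def inN (T : Tournament V) (v : V) : Set V := {w | T.arc w v}

/-- Arc neighborhood `N(uv)` of an arc `u → v`: vertices forming a directed
triangle with the arc. -/
def arcNbhd (T : Tournament V) (u v : V) : Set V := {w | T.arc v w ∧ T.arc w u}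

/-- `T.ColorableOn S k` means the induced subtournament `T[S]` can be partitioned
into at most `k` transitive sets. -/
def ColorableOn (T : Tournament V) (S : Set V) (k : ℕ) : Prop :=
  ∃ f : V → ℕ, (∀ v ∈ S, f v < k) ∧ ∀ i : ℕ, T.IsTransitiveSet {v | v ∈ S ∧ f v = i}

/-- The dichromatic number of `T`: the least `k` such that `V(T)` can be
partitioned into `k` transitive sets. -/
noncomputable def dichromaticNumber (T : Tournament V) : ℕ :=
  sInf {k | T.ColorableOn Set.univ k}

/-- An arc `u → v` is heavy if `N(uv)` contains a directed triangle. -/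
def IsHeavy (T : Tournament V) (u v : V) : Prop :=
  T.arc u v ∧ ∃ a b c,
    a ∈ T.arcNbhd u v ∧ b ∈ T.arcNbhd u v ∧ c ∈ T.arcNbhd u v ∧
    T.arc a b ∧ T.arc b c ∧ T.arc c a

/-- A tournament is light if it has no heavy arc. -/
def IsLight (T : Tournament V) : Prop := ∀ u v, ¬ T.IsHeavy u v

/-- The induced subtournament `T[S]` is light: for every arc within `S`, the part
of its arc neighborhood inside `S` is transitive. -/
def LightOn (T : Tournament V) (S : Set V) : Prop :=
  ∀ u ∈ S, ∀ v ∈ S, T.arc u v → T.IsTransitiveSet (T.arcNbhd u v ∩ S)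

/-- `S` is the vertex set of a directed triangle. -/
def IsTriangle (T : Tournament V) (S : Set V) : Prop :=
  ∃ a b c, S = {a, b, c} ∧ T.arc a b ∧ T.arc b c ∧ T.arc c a

/-- `S ⇒ U`: every arc between `S` and `U` is directed from `S` to `U`. -/
def Beats (T : Tournament V) (S U : Set V) : Prop :=
  ∀ s ∈ S, ∀ u ∈ U, T.arc s u

/-- `X 0, …, X (L-1)` is a `C₃`-chain of length `L`: pairwise vertex-disjoint
directed triangles with `X i ⇒ X (i+1)`. -/
def IsC3Chain (T : Tournament V) (X : ℕ → Set V) (L : ℕ) : Prop :=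
  (∀ i < L, T.IsTriangle (X i)) ∧
  (∀ i < L, ∀ j < L, i ≠ j → Disjoint (X i) (X j)) ∧
  (∀ i, i + 1 < L → T.Beats (X i) (X (i + 1)))

/-- `v 0, …, v k` are the vertices of a shortest directed path from `v 0` to `v k`:
consecutive arcs are present, and no directed path (walk) from `v 0` to `v k`
has fewer than `k` arcs. -/
def IsShortestPath (T : Tournament V) (v : ℕ → V) (k : ℕ) : Prop :=
  (∀ i < k, T.arc (v i) (v (i + 1))) ∧
  (∀ m : ℕ, ∀ p : ℕ → V, p 0 = v 0 → p m = v k →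
    (∀ i < m, T.arc (p i) (p (i + 1))) → k ≤ m)

/-- The path decomposition `D 0, …, D (k+1)` associated to the path `v 0, …, v k`:
`D 0 = N⁺(v 0)`, `D i = N(e i) \ (D 0 ∪ ⋯ ∪ D (i-1))` for `1 ≤ i ≤ k` where
`e i` is the arc `v (i-1) → v i`, and `D (k+1) = N⁻(v k) \ (D 0 ∪ ⋯ ∪ D k)`. -/
def PathDecomp (T : Tournament V) (v : ℕ → V) (k : ℕ) (D : ℕ → Set V) : Prop :=
  D 0 = T.outN (v 0) ∧
  (∀ i, 1 ≤ i → i ≤ k → D i = T.arcNbhd (v (i - 1)) (v i) \ ⋃ j < i, D j) ∧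
  D (k + 1) = T.inN (v k) \ ⋃ j < k + 1, D j

end Tournament

/-!
Take a `C₃`-chain `X 0 ⇒ X 1 ⇒ ⋯ ⇒ X (L-1)` of maximum length. In a light tournament a vertex
with an out-neighbour in one triangle of the chain has an out-neighbour in every later one, since
otherwise the next triangle would lie in the arc neighbourhood of that arc. Hence the common
out-neighbourhood of the last triangle is transitive (a triangle in it would extend the chain),
dually for the common in-neighbourhood of the first triangle, and no arc goes from the former to
the latter. For `u` in the last triangle `u → b → c → u`, the set `N⁺(u)` is covered by the
transitive sets `N(cu)`, `N(bc)` and the common out-neighbourhood of the triangle; dually for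
`N⁻(v)` with `v` in the first triangle. On `N⁻(v) ∪ N⁺(u)` the two common neighbourhoods, glued
along `u`, form a single transitive set, which saves one colour.
-/

namespace Tournament

variable {V : Type} {T : Tournament V}

lemma arc_irrefl (T : Tournament V) (a : V) : ¬ T.arc a a := fun h => T.asymm a a h h

lemma ne_of_arc {a b : V} (h : T.arc a b) : a ≠ b := by
  rintro rfl
  exact T.arc_irrefl a h

def commonOutN (T : Tournament V) (S : Set V) : Set V := {w | ∀ p ∈ S, T.arc p w}

def commonInN (T : Tournament V) (S : Set V) : Set V := {w | ∀ p ∈ S, T.arc w p}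

/-! ### Transitive sets and colourings -/

lemma IsTransitiveSet.mono {S S' : Set V} (h : T.IsTransitiveSet S) (hS : S' ⊆ S) :
    T.IsTransitiveSet S' :=
  fun a ha b hb c hc => h a (hS ha) b (hS hb) c (hS hc)

lemma isTransitiveSet_singleton (u : V) : T.IsTransitiveSet {u} := by
  intro a ha b hb c _ h
  rw [Set.mem_singleton_iff.1 ha, Set.mem_singleton_iff.1 hb] at h
  exact T.arc_irrefl u h.1

lemma IsTransitiveSet.union_of_beats {A B : Set V} (hA : T.IsTransitiveSet A)
    (hB : T.IsTransitiveSet B) (hAB : T.Beats A B) : T.IsTransitiveSet (A ∪ B) := by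
  rintro a ha b hb c hc ⟨hab, hbc, hca⟩
  rcases ha with ha | ha <;> rcases hb with hb | hb <;> rcases hc with hc | hc
  · exact hA a ha b hb c hc ⟨hab, hbc, hca⟩
  · exact T.asymm _ _ hca (hAB a ha c hc)
  · exact T.asymm _ _ hbc (hAB c hc b hb)
  · exact T.asymm _ _ hca (hAB a ha c hc)
  · exact T.asymm _ _ hab (hAB b hb a ha)
  · exact T.asymm _ _ hab (hAB b hb a ha)
  · exact T.asymm _ _ hbc (hAB c hc b hb)
  · exact hB a ha b hb c hc ⟨hab, hbc, hca⟩

lemma IsTransitiveSet.colorableOn {S : Set V} (h : T.IsTransitiveSet S) : T.ColorableOn S 1 :=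
  ⟨fun _ => 0, fun _ _ => Nat.one_pos, fun _ => h.mono fun _ hv => hv.1⟩

lemma ColorableOn.mono {S S' : Set V} {k : ℕ} (h : T.ColorableOn S k) (hS : S' ⊆ S) :
    T.ColorableOn S' k := by
  obtain ⟨f, hf, hcol⟩ := h
  exact ⟨f, fun v hv => hf v (hS hv), fun i => (hcol i).mono fun v hv => ⟨hS hv.1, hv.2⟩⟩

lemma ColorableOn.union {A B : Set V} {k l : ℕ} (hA : T.ColorableOn A k)
    (hB : T.ColorableOn B l) : T.ColorableOn (A ∪ B) (k + l) := by
  classical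
  obtain ⟨f, hf, hfcol⟩ := hA
  obtain ⟨g, hg, hgcol⟩ := hB
  refine ⟨fun v => if v ∈ A then f v else k + g v, ?_, fun i => ?_⟩
  · rintro v (hv | hv)
    · simp only [if_pos hv]; have := hf v hv; omega
    · by_cases hvA : v ∈ A
      · simp only [if_pos hvA]; have := hf v hvA; omega
      · simp only [if_neg hvA]; have := hg v hv; omega
  · by_cases hik : i < k
    · refine (hfcol i).mono ?_
      rintro v ⟨hv, rfl⟩
      by_cases hvA : v ∈ A
      · simp [hvA]
      · simp [hvA] at hik
    · refine (hgcol (i - k)).mono ?_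
      rintro v ⟨hv, rfl⟩
      by_cases hvA : v ∈ A
      · have := hf v hvA
        simp [hvA] at hik; omega
      · simp only [if_neg hvA]
        exact ⟨hv.resolve_left hvA, by omega⟩

/-! ### Reversing all arcs -/

def reverse (T : Tournament V) : Tournament V where
  arc u v := T.arc v u
  asymm u v := T.asymm v u
  total u v huv := T.total v u huv.symm

lemma IsTransitiveSet.reverse {S : Set V} (h : T.IsTransitiveSet S) :
    T.reverse.IsTransitiveSet S :=
  fun a ha b hb c hc hcyc => h a ha c hc b hb ⟨hcyc.2.2, hcyc.2.1, hcyc.1⟩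

lemma isTransitiveSet_reverse {S : Set V} :
    T.reverse.IsTransitiveSet S ↔ T.IsTransitiveSet S :=
  ⟨fun h => h.reverse, fun h => h.reverse⟩

lemma ColorableOn.reverse {S : Set V} {k : ℕ} (h : T.ColorableOn S k) :
    T.reverse.ColorableOn S k := by
  obtain ⟨f, hf, hcol⟩ := h
  exact ⟨f, hf, fun i => (hcol i).reverse⟩

lemma IsTriangle.reverse {S : Set V} (h : T.IsTriangle S) : T.reverse.IsTriangle S := by
  obtain ⟨a, b, c, rfl, hab, hbc, hca⟩ := h
  exact ⟨a, c, b, by rw [Set.pair_comm], hca, hbc, hab⟩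

lemma IsLight.reverse (hT : T.IsLight) : T.reverse.IsLight := by
  rintro u v ⟨huv, a, b, c, ha, hb, hc, hab, hbc, hca⟩
  exact hT v u ⟨huv, a, c, b, ⟨ha.2, ha.1⟩, ⟨hc.2, hc.1⟩, ⟨hb.2, hb.1⟩, hca, hbc, hab⟩

lemma IsC3Chain.reverse {X : ℕ → Set V} {L : ℕ} (hX : T.IsC3Chain X L) :
    T.reverse.IsC3Chain (fun i => X (L - 1 - i)) L := by
  obtain ⟨htri, hdisj, hbeats⟩ := hX
  refine ⟨fun i hi => (htri _ (by omega)).reverse,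
    fun i hi j hj hij => hdisj _ (by omega) _ (by omega) (by omega), fun i hi s hs t ht => ?_⟩
  have h := hbeats (L - 1 - (i + 1)) (by omega)
  rw [show L - 1 - (i + 1) + 1 = L - 1 - i by omega] at h
  exact h t ht s hs

/-! ### Triangles in light tournaments -/

lemma IsTriangle.exists_eq_insert {S : Set V} (h : T.IsTriangle S) {v : V} (hv : v ∈ S) :
    ∃ b c, S = {v, b, c} ∧ T.arc v b ∧ T.arc b c ∧ T.arc c v := by
  obtain ⟨a, b, c, rfl, hab, hbc, hca⟩ := h
  simp only [Set.mem_insert_iff, Set.mem_singleton_iff] at hv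
  rcases hv with rfl | rfl | rfl
  · exact ⟨b, c, rfl, hab, hbc, hca⟩
  · exact ⟨c, a, by ext; simp only [Set.mem_insert_iff, Set.mem_singleton_iff]; tauto,
      hbc, hca, hab⟩
  · exact ⟨a, b, by ext; simp only [Set.mem_insert_iff, Set.mem_singleton_iff]; tauto,
      hca, hab, hbc⟩

lemma IsTriangle.exists_mem_ne {S : Set V} (h : T.IsTriangle S) (u : V) : ∃ v ∈ S, v ≠ u := by
  obtain ⟨a, b, c, rfl, hab, -, -⟩ := h
  by_cases hau : a = u
  · exact ⟨b, by simp, fun hbu => ne_of_arc hab (hau.trans hbu.symm)⟩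
  · exact ⟨a, by simp, hau⟩

lemma IsTriangle.nonempty {S : Set V} (h : T.IsTriangle S) : S.Nonempty := by
  obtain ⟨a, b, c, rfl, -⟩ := h
  exact ⟨a, by simp⟩

lemma IsLight.isTransitiveSet_arcNbhd (hT : T.IsLight) {a b : V} (hab : T.arc a b) :
    T.IsTransitiveSet (T.arcNbhd a b) :=
  fun x hx y hy z hz h => hT a b ⟨hab, x, y, z, hx, hy, hz, h⟩

/-- If `w → q` and `q ⇒ S`, then `w` has an out-neighbour in `S`, because otherwise the
triangle `S` lies in `N(wq)`. -/
lemma IsLight.exists_arc_of_beats (hT : T.IsLight) {S : Set V} (hS : T.IsTriangle S)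
    {w q : V} (hwq : T.arc w q) (hq : ∀ p ∈ S, T.arc q p) : ∃ p ∈ S, T.arc w p := by
  by_contra! hno
  obtain ⟨a, b, c, rfl, hab, hbc, hca⟩ := hS
  have hmem : ∀ p ∈ ({a, b, c} : Set V), p ∈ T.arcNbhd w q := by
    intro p hp
    refine ⟨hq p hp, (T.total p w ?_).resolve_right (hno p hp)⟩
    rintro rfl
    simp only [Set.mem_insert_iff, Set.mem_singleton_iff] at hp
    rcases hp with rfl | rfl | rfl
    exacts [hno b (by simp) hab, hno c (by simp) hbc, hno a (by simp) hca]
  exact hT.isTransitiveSet_arcNbhd hwq a (hmem a (by simp)) b (hmem b (by simp))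
    c (hmem c (by simp)) ⟨hab, hbc, hca⟩

lemma IsLight.exists_outN_subset (hT : T.IsLight) {Y : Set V} (hY : T.IsTriangle Y) {u : V}
    (hu : u ∈ Y) : ∃ A B, T.IsTransitiveSet A ∧ T.IsTransitiveSet B ∧
      T.outN u ⊆ A ∪ B ∪ T.commonOutN Y := by
  obtain ⟨b, c, rfl, hub, hbc, hcu⟩ := hY.exists_eq_insert hu
  refine ⟨T.arcNbhd c u, T.arcNbhd b c, hT.isTransitiveSet_arcNbhd hcu,
    hT.isTransitiveSet_arcNbhd hbc, fun w (huw : T.arc u w) => ?_⟩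
  by_cases hwc : T.arc w c
  · exact Or.inl (Or.inl ⟨huw, hwc⟩)
  have hcw : T.arc c w := (T.total c w fun h => T.asymm _ _ hcu (h ▸ huw)).resolve_right hwc
  by_cases hwb : T.arc w b
  · exact Or.inl (Or.inr ⟨hcw, hwb⟩)
  have hbw : T.arc b w := (T.total b w fun h => T.asymm _ _ hbc (h ▸ hcw)).resolve_right hwb
  refine Or.inr fun p hp => ?_
  simp only [Set.mem_insert_iff, Set.mem_singleton_iff] at hp
  rcases hp with rfl | rfl | rfl <;> assumption

lemma IsLight.exists_inN_subset (hT : T.IsLight) {Z : Set V} (hZ : T.IsTriangle Z) {v : V}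
    (hv : v ∈ Z) : ∃ A B, T.IsTransitiveSet A ∧ T.IsTransitiveSet B ∧
      T.inN v ⊆ A ∪ B ∪ T.commonInN Z := by
  obtain ⟨A, B, hA, hB, h⟩ := hT.reverse.exists_outN_subset hZ.reverse hv
  exact ⟨A, B, isTransitiveSet_reverse.1 hA, isTransitiveSet_reverse.1 hB, h⟩

lemma IsLight.colorableOn_outN (hT : T.IsLight) {Y : Set V} (hY : T.IsTriangle Y) {u : V}
    (hu : u ∈ Y) (hYt : T.IsTransitiveSet (T.commonOutN Y)) : T.ColorableOn (T.outN u) 3 := by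
  obtain ⟨A, B, hA, hB, h⟩ := hT.exists_outN_subset hY hu
  exact ((hA.colorableOn.union hB.colorableOn).union hYt.colorableOn).mono h

lemma IsLight.colorableOn_inN (hT : T.IsLight) {Z : Set V} (hZ : T.IsTriangle Z) {v : V}
    (hv : v ∈ Z) (hZt : T.IsTransitiveSet (T.commonInN Z)) : T.ColorableOn (T.inN v) 3 :=
  (hT.reverse.colorableOn_outN hZ.reverse hv hZt.reverse).reverse

/-- The common neighbourhoods of `Y ∋ u` and `Z` merge, together with `u`, into one transitive
set `(commonInN Z ∩ N⁻(u)) ∪ {u} ∪ commonOutN Y`, whose arcs all point left to right. -/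
lemma IsLight.colorableOn_inN_union_outN (hT : T.IsLight) {Y Z : Set V} (hY : T.IsTriangle Y)
    (hZ : T.IsTriangle Z) {u v : V} (hu : u ∈ Y) (hv : v ∈ Z)
    (hYt : T.IsTransitiveSet (T.commonOutN Y)) (hZt : T.IsTransitiveSet (T.commonInN Z))
    (hYZ : ∀ x ∈ T.commonOutN Y, ∀ z ∈ T.commonInN Z, ¬ T.arc x z) :
    T.ColorableOn (T.inN v ∪ T.outN u) 5 := by
  obtain ⟨A, B, hA, hB, hout⟩ := hT.exists_outN_subset hY hu
  obtain ⟨A', B', hA', hB', hin⟩ := hT.exists_inN_subset hZ hv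
  have hM : T.IsTransitiveSet ((T.commonInN Z ∩ T.inN u) ∪ ({u} ∪ T.commonOutN Y)) := by
    refine (hZt.mono Set.inter_subset_left).union_of_beats
      ((isTransitiveSet_singleton u).union_of_beats hYt ?_) ?_
    · rintro s rfl x hx
      exact hx s hu
    · rintro z ⟨hz, hzu⟩ x (rfl | hx)
      · exact hzu
      · refine (T.total z x ?_).resolve_right (hYZ x hx z hz)
        rintro rfl
        exact T.asymm _ _ hzu (hx u hu)
  refine ((((hA.colorableOn.union hB.colorableOn).union hA'.colorableOn).union
    hB'.colorableOn).union hM.colorableOn).mono fun w hw => ?_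
  by_cases huw : T.arc u w
  · rcases hout huw with (h | h) | h
    · exact Or.inl (Or.inl (Or.inl (Or.inl h)))
    · exact Or.inl (Or.inl (Or.inl (Or.inr h)))
    · exact Or.inr (Or.inr (Or.inr h))
  have hwv : T.arc w v := hw.resolve_right huw
  rcases hin hwv with (h | h) | h
  · exact Or.inl (Or.inl (Or.inr h))
  · exact Or.inl (Or.inr h)
  · by_cases hwu : w = u
    · exact Or.inr (Or.inr (Or.inl hwu))
    · exact Or.inr (Or.inl ⟨h, (T.total w u hwu).resolve_right huw⟩)

/-! ### Maximal `C₃`-chains -/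

lemma isC3Chain_one {S : Set V} (hS : T.IsTriangle S) : T.IsC3Chain (fun _ => S) 1 :=
  ⟨fun _ _ => hS, fun i hi j hj hij => by omega, fun i hi => by omega⟩

lemma IsC3Chain.length_le_card [Fintype V] {X : ℕ → Set V} {L : ℕ} (hX : T.IsC3Chain X L) :
    L ≤ Fintype.card V := by
  choose f hf using fun i : Fin L => (hX.1 i i.2).nonempty
  refine (Fintype.card_fin L).ge.trans (Fintype.card_le_of_injective f fun i j hij => ?_)
  by_contra hne
  exact Set.disjoint_left.1 (hX.2.1 i i.2 j j.2 (Fin.val_injective.ne hne)) (hf i) (hij ▸ hf j)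

lemma exists_isC3Chain_maximal [Fintype V] (htri : ∃ a b c : V, T.arc a b ∧ T.arc b c ∧ T.arc c a) :
    ∃ X L, 0 < L ∧ T.IsC3Chain X L ∧ ∀ Y, ¬ T.IsC3Chain Y (L + 1) := by
  classical
  obtain ⟨a, b, c, hab, hbc, hca⟩ := htri
  have h1 : ∃ X, T.IsC3Chain X 1 := ⟨_, isC3Chain_one ⟨a, b, c, rfl, hab, hbc, hca⟩⟩
  have hcard : 1 ≤ Fintype.card V := h1.choose_spec.length_le_card
  obtain ⟨X, hX⟩ := Nat.findGreatest_spec (P := fun L => ∃ X, T.IsC3Chain X L) hcard h1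
  exact ⟨X, _, Nat.le_findGreatest hcard h1, hX, fun Y hY =>
    Nat.findGreatest_is_greatest (Nat.lt_succ_self _) hY.length_le_card ⟨Y, hY⟩⟩

section Chain

variable {X : ℕ → Set V} {L : ℕ}

lemma IsC3Chain.exists_arc_of_le (hT : T.IsLight) (hX : T.IsC3Chain X L) {i j : ℕ}
    (hij : i ≤ j) (hj : j < L) {w q : V} (hq : q ∈ X i) (hwq : T.arc w q) :
    ∃ p ∈ X j, T.arc w p := by
  induction j, hij using Nat.le_induction with
  | base => exact ⟨q, hq, hwq⟩
  | succ j _ ih =>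
    obtain ⟨p, hp, hwp⟩ := ih (by omega)
    exact hT.exists_arc_of_beats (hX.1 (j + 1) hj) hwp (hX.2.2 j hj p hp)

lemma IsC3Chain.not_mem_commonOutN_last (hT : T.IsLight) (hX : T.IsC3Chain X L) {k : ℕ}
    (hk : k < L) {t : V} (ht : t ∈ X k) : t ∉ T.commonOutN (X (L - 1)) := by
  intro hlast
  by_cases hkL : k + 1 < L
  · obtain ⟨a, ha⟩ := (hX.1 (k + 1) hkL).nonempty
    obtain ⟨p, hp, htp⟩ :=
      hX.exists_arc_of_le hT (by omega : k + 1 ≤ L - 1) (by omega) ha (hX.2.2 k hkL t ht a ha)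
    exact T.asymm _ _ htp (hlast p hp)
  · rw [show k = L - 1 by omega] at ht
    exact T.arc_irrefl t (hlast t ht)

lemma IsC3Chain.append (hT : T.IsLight) (hX : T.IsC3Chain X L) {S : Set V}
    (hS : T.IsTriangle S) (hXS : T.Beats (X (L - 1)) S) :
    T.IsC3Chain (fun n => if n < L then X n else S) (L + 1) := by
  have hdisjS : ∀ k < L, Disjoint (X k) S := fun k hk => Set.disjoint_left.2 fun t ht htS =>
    hX.not_mem_commonOutN_last hT hk ht fun p hp => hXS p hp t htS
  obtain ⟨htri, hdisj, hbeats⟩ := hX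
  refine ⟨fun i hi => ?_, fun i hi j hj hij => ?_, fun i hi => ?_⟩
  · by_cases h : i < L
    · simpa [h] using htri i h
    · simpa [h] using hS
  · by_cases hiL : i < L <;> by_cases hjL : j < L
    · simpa [hiL, hjL] using hdisj i hiL j hjL hij
    · simpa [hiL, hjL] using hdisjS i hiL
    · simpa [hiL, hjL] using (hdisjS j hjL).symm
    · omega
  · by_cases hi1 : i + 1 < L
    · simpa [hi1, (by omega : i < L)] using hbeats i hi1
    · have hiL : i = L - 1 := by omega
      simp only [hi1, (by omega : i < L), if_true, if_false]
      rw [hiL]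
      exact hXS

lemma IsC3Chain.isTransitiveSet_commonOutN_last (hT : T.IsLight) (hX : T.IsC3Chain X L)
    (hmax : ∀ Y, ¬ T.IsC3Chain Y (L + 1)) : T.IsTransitiveSet (T.commonOutN (X (L - 1))) := by
  intro a ha b hb c hc ⟨hab, hbc, hca⟩
  refine hmax _ (hX.append hT ⟨a, b, c, rfl, hab, hbc, hca⟩ fun s hs t ht => ?_)
  simp only [Set.mem_insert_iff, Set.mem_singleton_iff] at ht
  rcases ht with rfl | rfl | rfl
  exacts [ha s hs, hb s hs, hc s hs]

lemma IsC3Chain.isTransitiveSet_commonInN_first (hT : T.IsLight) (hX : T.IsC3Chain X L)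
    (hmax : ∀ Y, ¬ T.IsC3Chain Y (L + 1)) : T.IsTransitiveSet (T.commonInN (X 0)) := by
  have h := hX.reverse.isTransitiveSet_commonOutN_last hT.reverse fun Y hY => hmax _ hY.reverse
  rw [Nat.sub_self] at h
  exact isTransitiveSet_reverse.1 h

lemma IsC3Chain.not_arc_commonOutN_commonInN (hT : T.IsLight) (hX : T.IsC3Chain X L)
    (hL : 0 < L) : ∀ x ∈ T.commonOutN (X (L - 1)), ∀ z ∈ T.commonInN (X 0), ¬ T.arc x z := by
  intro x hx z hz hxz
  obtain ⟨p, hp, hxp⟩ := hT.exists_arc_of_beats (hX.1 0 hL) hxz hz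
  obtain ⟨p', hp', hxp'⟩ := hX.exists_arc_of_le hT (j := L - 1) (Nat.zero_le _) (by omega) hp hxp
  exact T.asymm _ _ hxp' (hx p' hp')

end Chain

end Tournament

open Tournament in
theorem stmt_11 {V : Type} [Fintype V] (T : Tournament V) (hlight : T.IsLight)
    (htri : ∃ a b c : V, T.arc a b ∧ T.arc b c ∧ T.arc c a) :
    ∃ u v : V, u ≠ v ∧
      T.ColorableOn (T.outN u) 3 ∧ T.ColorableOn (T.inN v) 3 ∧
      T.ColorableOn (T.inN v ∪ T.outN u) 5 := by
  obtain ⟨X, L, hL, hX, hmax⟩ := exists_isC3Chain_maximal htri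
  have hlast : T.IsTriangle (X (L - 1)) := hX.1 _ (by omega)
  have hfirst : T.IsTriangle (X 0) := hX.1 0 hL
  obtain ⟨u, hu⟩ := hlast.nonempty
  obtain ⟨v, hv, hvu⟩ := hfirst.exists_mem_ne u
  have hYt := hX.isTransitiveSet_commonOutN_last hlight hmax
  have hZt := hX.isTransitiveSet_commonInN_first hlight hmax
  exact ⟨u, v, hvu.symm, hlight.colorableOn_outN hlast hu hYt,
    hlight.colorableOn_inN hfirst hv hZt, hlight.colorableOn_inN_union_outN hlast hfirst hu hv
      hYt hZt (hX.not_arc_commonOutN_commonInN hlight hL)⟩
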